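/- For fixed m ≥ 1 and k ≥ 0, define polynomials P_m(x,t) by P_0 = 1, P_1 = 1 − x, and P_m = (1 − x − x^{k+2}(t−1))P_{m−1} − x²P_{m−2} for m ≥ 2. Then the generating function for Motzkin paths of height at most m, weighted by length (in x) and number of k-plateaus (in t), equals P_m(x,t)/P_{m+1}(x,t). -/

import Mathlib

inductive Step : Type
  | U | F | D
  deriving DecidableEq

instance : Fintype Step :=
  ⟨{Step.U, Step.F, Step.D}, fun x => by cases x <;> decide⟩

def stepVal : Step → ℤ
  | .U => 1
  | .F => 0
  | .D => -1

/-- Height of the path after the first `i` steps. -/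
def ht (p : List Step) (i : ℕ) : ℤ := ((p.take i).map stepVal).sum

/-- A Motzkin path: starts and ends at height 0 and stays nonnegative. -/
def IsMotzkin (p : List Step) : Prop :=
  ht p p.length = 0 ∧ ∀ i ≤ p.length, 0 ≤ ht p i

instance : DecidablePred IsMotzkin := fun p => by
  unfold IsMotzkin; infer_instance

/-- Number of ascents: maximal runs of up steps (counted at their last up step). -/
def asc (p : List Step) : ℕ :=
  ((List.range p.length).filter
    (fun i => p[i]? == some Step.U && p[i+1]? != some Step.U)).length

/-- Number of occurrences of `w` as a consecutive subword of `p`. -/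
def countSubword (w p : List Step) : ℕ :=
  ((List.range p.length).filter (fun i => w.isPrefixOf (p.drop i))).length

/-- Number of plateaus: occurrences of a subword U F^k D for some k ≥ 0. -/
def plt (p : List Step) : ℕ :=
  ((List.range p.length).filter (fun i =>
    (List.range p.length).any (fun k =>
      (Step.U :: (List.replicate k Step.F ++ [Step.D])).isPrefixOf (p.drop i)))).length
/-- A k-plateau is an occurrence of the consecutive subword U F^k D. -/
def pltk (k : ℕ) (p : List Step) : ℕ :=
  countSubword (Step.U :: (List.replicate k Step.F ++ [Step.D])) p

/-- The generating function for Motzkin paths of height bounded by m,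
by length (x) and number of k-plateaus (t). -/
noncomputable def FpltkBdd (k m : ℕ) : PowerSeries (Polynomial ℚ) :=
  PowerSeries.mk fun n =>
    ∑ f : Fin n → Step,
      if IsMotzkin (List.ofFn f) ∧ ∀ i ≤ n, ht (List.ofFn f) i ≤ (m : ℤ) then
        (Polynomial.X : Polynomial ℚ) ^ pltk k (List.ofFn f)
      else 0

/-!
First-return decomposition: a nonempty path of height at most `m + 1` either starts with a flat
step, or is an arch `U q D r` with `q` of height at most `m` and `r` of height at most `m + 1`.
The `k`-plateaus of `U q D r` are those of `q` and of `r`, plus one exactly when `q = F^k`. Hence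
`F_{m+1} = 1 + x F_{m+1} + x² (F_m + (t - 1) x^k) F_{m+1}`, that is
`F_{m+1} (1 - x - x^{k+2} (t - 1) - x² F_m) = 1`, while `F_0 = 1 / (1 - x)`. Multiplying by
`P_{m+1}` turns this into the recurrence of the `P_m`, so `F_m P_{m+1} = P_m` follows by induction.
-/

open Polynomial

lemma neg_one_le_stepVal (x : Step) : -1 ≤ stepVal x := by
  cases x <;> decide

lemma stepVal_eq_neg_one_iff {x : Step} : stepVal x = -1 ↔ x = Step.D := by
  cases x <;> decide

@[simp] lemma ht_zero (p : List Step) : ht p 0 = 0 := rfl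

@[simp] lemma ht_cons_succ (x : Step) (p : List Step) (i : ℕ) :
    ht (x :: p) (i + 1) = stepVal x + ht p i := by
  simp [ht]

lemma ht_length (p : List Step) : ht p p.length = (p.map stepVal).sum := by
  simp [ht]

lemma ht_length_eq_add (p : List Step) (i : ℕ) :
    ht p p.length = ht p i + ht (p.drop i) (p.drop i).length := by
  rw [ht_length, ht_length, ht, ← List.sum_append, ← List.map_append, List.take_append_drop]

lemma ht_append_of_le_length {a : List Step} (b : List Step) {i : ℕ} (h : i ≤ a.length) :
    ht (a ++ b) i = ht a i := by
  simp [ht, List.take_append_of_le_length h]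

lemma ht_append_length_add (a b : List Step) (j : ℕ) :
    ht (a ++ b) (a.length + j) = ht a a.length + ht b j := by
  simp [ht, List.take_append, List.take_of_length_le]

lemma ht_take_of_le (p : List Step) {n i : ℕ} (h : i ≤ n) : ht (p.take n) i = ht p i := by
  simp [ht, List.take_take, min_eq_left h]

lemma ht_of_isPrefix {s p : List Step} (h : s <+: p) {i : ℕ} (hi : i ≤ s.length) :
    ht s i = ht p i := by
  obtain ⟨t, rfl⟩ := h
  exact (ht_append_of_le_length t hi).symm

lemma ht_succ (p : List Step) {i : ℕ} (h : i < p.length) :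
    ht p (i + 1) = ht p i + stepVal p[i] := by
  simp only [ht, ← List.take_append_getElem h, List.map_append, List.sum_append,
    List.map_singleton, List.sum_singleton]

lemma ht_replicate_F (n i : ℕ) : ht (List.replicate n Step.F) i = 0 := by
  simp [ht, List.take_replicate, stepVal]

lemma forall_ht_cons_iff {S : Set ℤ} (x : Step) (p : List Step) :
    (∀ i ≤ (x :: p).length, ht (x :: p) i ∈ S) ↔
      0 ∈ S ∧ ∀ i ≤ p.length, ht p i ∈ (stepVal x + ·) ⁻¹' S := by
  simp only [List.length_cons, ← Nat.lt_succ_iff, Nat.forall_lt_succ_left, ht_zero, ht_cons_succ,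
    Set.mem_preimage]

lemma forall_ht_append_iff {S : Set ℤ} (a b : List Step) :
    (∀ i ≤ (a ++ b).length, ht (a ++ b) i ∈ S) ↔
      (∀ i ≤ a.length, ht a i ∈ S) ∧ ∀ j ≤ b.length, ht b j ∈ (ht a a.length + ·) ⁻¹' S := by
  constructor
  · intro h
    refine ⟨fun i hi => ?_, fun j hj => ?_⟩
    · simpa [ht_append_of_le_length b hi] using h i (by simp; omega)
    · simpa [ht_append_length_add] using h (a.length + j) (by simp; omega)
  · rintro ⟨ha, hb⟩ i hi
    rcases le_total i a.length with hia | hia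
    · rw [ht_append_of_le_length b hia]
      exact ha i hia
    · obtain ⟨j, rfl⟩ := Nat.exists_eq_add_of_le hia
      rw [ht_append_length_add]
      exact Set.mem_preimage.1 <| hb j (by simp at hi; omega)

lemma isMotzkin_cons_F_iff (p : List Step) : IsMotzkin (Step.F :: p) ↔ IsMotzkin p := by
  have h := forall_ht_cons_iff (S := Set.Ici 0) Step.F p
  simp only [Set.mem_Ici, Set.mem_preimage, stepVal, zero_add, le_refl, true_and] at h
  rw [IsMotzkin, IsMotzkin, h, List.length_cons, ht_cons_succ, stepVal, zero_add]

lemma not_isMotzkin_cons_D (p : List Step) : ¬ IsMotzkin (Step.D :: p) := fun h => by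
  simpa [stepVal] using h.2 1 (by simp)

lemma exists_first_step_to_neg_one {p : List Step} (hge : ∀ i ≤ p.length, -1 ≤ ht p i)
    (hend : ht p p.length = -1) :
    ∃ i, ∃ hi : i < p.length, p[i] = Step.D ∧ ht p i = 0 ∧ ∀ l ≤ i, 0 ≤ ht p l := by
  obtain ⟨n, hn⟩ : ∃ n, p.length = n + 1 := by
    cases p with
    | nil => simp at hend
    | cons x p => exact ⟨p.length, rfl⟩
  have hex : ∃ i, ht p (i + 1) = -1 := ⟨n, hn ▸ hend⟩
  classical
  set i := Nat.find hex
  have hilt : i < p.length := hn ▸ Nat.lt_succ_of_le (Nat.find_min' hex (hn ▸ hend))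
  have hnn : ∀ l ≤ i, 0 ≤ ht p l := by
    rintro (_ | l) hl
    · simp
    · have h1 := hge (l + 1) (by omega)
      have h2 := Nat.find_min hex (show l < i by omega)
      omega
  have hstep := ht_succ p hilt
  have hi : ht p (i + 1) = -1 := Nat.find_spec hex
  have := neg_one_le_stepVal p[i]
  have := hnn i le_rfl
  exact ⟨i, hilt, stepVal_eq_neg_one_iff.1 (by omega), by omega, hnn⟩

lemma exists_eq_arch {p : List Step} (h : IsMotzkin (Step.U :: p)) :
    ∃ q r, IsMotzkin q ∧ p = q ++ Step.D :: r := by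
  obtain ⟨hend, hnn⟩ := h
  simp only [List.length_cons, ht_cons_succ, stepVal] at hend
  have hge : ∀ i ≤ p.length, -1 ≤ ht p i := fun i hi => by
    have := hnn (i + 1) (by simpa using hi)
    simp only [ht_cons_succ, stepVal] at this
    omega
  -- the arch closes at the first down step of `p` from level 0 to level -1
  obtain ⟨i, hi, hD, hi0, hnn'⟩ := exists_first_step_to_neg_one hge (by omega)
  refine ⟨p.take i, p.drop (i + 1), ⟨?_, fun l hl => ?_⟩, ?_⟩
  · rwa [List.length_take_of_le hi.le, ht_take_of_le _ le_rfl]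
  · rw [List.length_take_of_le hi.le] at hl
    rw [ht_take_of_le _ hl]
    exact hnn' l hl
  · rw [← hD, List.getElem_cons_drop, List.take_append_drop]

lemma length_le_of_append_D_eq {q₁ q₂ r₁ r₂ : List Step} (hq₁ : ht q₁ q₁.length = 0)
    (hq₂ : IsMotzkin q₂) (h : q₁ ++ Step.D :: r₁ = q₂ ++ Step.D :: r₂) :
    q₂.length ≤ q₁.length := by
  by_contra! hlt
  have hle : q₁.length + 1 ≤ q₂.length := hlt
  have : 0 ≤ ht q₂ (q₁.length + 1) := hq₂.2 _ hle
  rw [← ht_append_of_le_length (Step.D :: r₂) hle, ← h, ht_append_length_add, hq₁] at this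
  simp [stepVal] at this

lemma arch_injective {q₁ q₂ r₁ r₂ : List Step} (hq₁ : IsMotzkin q₁) (hq₂ : IsMotzkin q₂)
    (h : q₁ ++ Step.D :: r₁ = q₂ ++ Step.D :: r₂) : q₁ = q₂ ∧ r₁ = r₂ := by
  have hlen := le_antisymm (length_le_of_append_D_eq hq₂.1 hq₁ h.symm)
    (length_le_of_append_D_eq hq₁.1 hq₂ h)
  obtain ⟨hq, hr⟩ := List.append_inj h hlen
  exact ⟨hq, List.cons_injective hr⟩

def IsBddMotzkin (m : ℕ) (p : List Step) : Prop :=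
  ht p p.length = 0 ∧ ∀ i ≤ p.length, ht p i ∈ Set.Icc 0 (m : ℤ)

lemma isBddMotzkin_iff {m : ℕ} {p : List Step} :
    IsBddMotzkin m p ↔ IsMotzkin p ∧ ∀ i ≤ p.length, ht p i ≤ m := by
  simp only [IsBddMotzkin, IsMotzkin, Set.mem_Icc, forall_and, and_assoc]

instance (m : ℕ) : DecidablePred (IsBddMotzkin m) := fun _ =>
  decidable_of_iff _ isBddMotzkin_iff.symm

lemma IsBddMotzkin.isMotzkin {m : ℕ} {p : List Step} (h : IsBddMotzkin m p) : IsMotzkin p :=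
  (isBddMotzkin_iff.1 h).1

lemma isBddMotzkin_cons_F_iff (m : ℕ) (p : List Step) :
    IsBddMotzkin m (Step.F :: p) ↔ IsBddMotzkin m p := by
  rw [IsBddMotzkin, IsBddMotzkin, forall_ht_cons_iff, List.length_cons, ht_cons_succ]
  simp [stepVal]

lemma isBddMotzkin_replicate_F (m n : ℕ) : IsBddMotzkin m (List.replicate n Step.F) := by
  simp [IsBddMotzkin, ht_replicate_F]

lemma isBddMotzkin_zero_iff {p : List Step} :
    IsBddMotzkin 0 p ↔ p = List.replicate p.length Step.F := by
  induction p with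
  | nil => simp [IsBddMotzkin]
  | cons x p ih =>
    cases x with
    | F => simp [isBddMotzkin_cons_F_iff, ih, List.replicate_succ]
    | U | D =>
      simp only [List.length_cons, List.replicate_succ, List.cons.injEq, reduceCtorEq,
        false_and, iff_false]
      intro h
      simpa [stepVal] using h.2 1 (by simp)

lemma isBddMotzkin_arch_iff {m : ℕ} {q : List Step} (r : List Step) (hq : IsMotzkin q) :
    IsBddMotzkin (m + 1) (Step.U :: (q ++ Step.D :: r)) ↔
      IsBddMotzkin m q ∧ IsBddMotzkin (m + 1) r := by
  obtain ⟨hqe, hqn⟩ := hq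
  have hend : ht (Step.U :: (q ++ Step.D :: r)) (Step.U :: (q ++ Step.D :: r)).length =
      ht r r.length := by
    rw [ht_length] at hqe ⊢
    simp [hqe, stepVal, ht_length]
  rw [IsBddMotzkin, hend, forall_ht_cons_iff, forall_ht_append_iff, forall_ht_cons_iff]
  simp only [IsBddMotzkin, Set.mem_preimage, Set.mem_Icc, hqe, stepVal]
  push_cast
  constructor
  · rintro ⟨hrend, -, hql, -, hrl⟩
    refine ⟨⟨trivial, fun i hi => ⟨hqn i hi, ?_⟩⟩, hrend, fun j hj => ?_⟩
    · linarith [(hql i hi).2]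
    · constructor <;> linarith [hrl j hj]
  · rintro ⟨⟨-, hql⟩, hrend, hrl⟩
    refine ⟨hrend, ⟨trivial, by positivity⟩, fun i hi => ?_, by simp, fun j hj => ?_⟩
    · constructor <;> linarith [hql i hi]
    · constructor <;> linarith [hrl j hj]

lemma countSubword_cons (w : List Step) (x : Step) (p : List Step) :
    countSubword w (x :: p) = (if w <+: x :: p then 1 else 0) + countSubword w p := by
  simp only [countSubword, ← List.countP_eq_length_filter, List.length_cons,
    List.range_succ_eq_map, List.countP_cons, List.countP_map, List.drop_zero,
    List.isPrefixOf_iff_prefix]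
  simp [Function.comp_def, add_comm]

lemma countSubword_append {w a b : List Step}
    (h : ∀ i < a.length, w <+: a.drop i ++ b → w <+: a.drop i) :
    countSubword w (a ++ b) = countSubword w a + countSubword w b := by
  induction a with
  | nil => simp [countSubword]
  | cons x a ih =>
    have hx : w <+: x :: (a ++ b) ↔ w <+: x :: a :=
      ⟨h 0 (by simp), fun hw => hw.trans (List.prefix_append _ _)⟩
    rw [List.cons_append, countSubword_cons, countSubword_cons,
      ih fun i hi => h (i + 1) (by simp; omega)]
    simp only [hx]
    omega

def plateau (k : ℕ) : List Step := Step.U :: (List.replicate k Step.F ++ [Step.D])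

lemma pltk_eq_countSubword_plateau (k : ℕ) (p : List Step) :
    pltk k p = countSubword (plateau k) p := rfl

lemma ht_plateau {k i : ℕ} (h1 : 1 ≤ i) (h2 : i ≤ k + 1) : ht (plateau k) i = 1 := by
  obtain ⟨j, rfl⟩ := Nat.exists_eq_add_of_le' h1
  rw [plateau, ht_cons_succ, ht_append_of_le_length _ (by simp; omega), ht_replicate_F]
  rfl

lemma plateau_isPrefix_of_isPrefix_drop_append {k i : ℕ} {q : List Step} (t : List Step)
    (hq : IsMotzkin q) (hi : i < q.length) (h : plateau k <+: q.drop i ++ t) :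
    plateau k <+: q.drop i := by
  rcases List.prefix_or_prefix_of_prefix h (List.prefix_append _ _) with h' | h'
  · exact h'
  by_cases hlen : (q.drop i).length = (plateau k).length
  · exact (h'.eq_of_length hlen) ▸ List.prefix_refl _
  -- otherwise `q.drop i` is a nonempty proper prefix of the plateau, so it climbs by one level,
  -- and `q` would end above its level at `i`
  have hs : (q.drop i).length ≤ k + 1 := by
    have := h'.length_le
    simp only [plateau, List.length_cons, List.length_append, List.length_replicate,
      List.length_nil, List.length_drop] at this hlen ⊢
    omega
  have hclimb : ht (q.drop i) (q.drop i).length = 1 := by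
    rw [ht_of_isPrefix h' le_rfl, ht_plateau (by simp; omega) hs]
  have := ht_length_eq_add q i
  have := hq.2 i hi.le
  have := hq.1
  omega

lemma replicate_F_append_D_isPrefix_iff {k : ℕ} {q : List Step} (r : List Step)
    (hq : IsMotzkin q) :
    List.replicate k Step.F ++ [Step.D] <+: q ++ Step.D :: r ↔ q = List.replicate k Step.F := by
  induction k generalizing q with
  | zero =>
    cases q with
    | nil => simp
    | cons x q =>
      simp only [List.replicate_zero, List.nil_append, List.cons_append, List.cons_prefix_cons,
        List.nil_prefix, and_true, reduceCtorEq, iff_false]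
      rintro rfl
      exact not_isMotzkin_cons_D q hq
  | succ k ih =>
    cases q with
    | nil => simp [List.replicate_succ]
    | cons x q =>
      rw [List.replicate_succ, List.cons_append, List.cons_append, List.cons_prefix_cons,
        List.cons.injEq]
      by_cases hx : x = Step.F
      · subst hx
        simp only [true_and]
        exact ih ((isMotzkin_cons_F_iff q).1 hq)
      · simp [Ne.symm hx, hx]

lemma plateau_isPrefix_arch_iff {k : ℕ} {q : List Step} (r : List Step) (hq : IsMotzkin q) :
    plateau k <+: Step.U :: (q ++ Step.D :: r) ↔ q = List.replicate k Step.F := by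
  rw [plateau, List.cons_prefix_cons, replicate_F_append_D_isPrefix_iff r hq]
  exact and_iff_right rfl

lemma pltk_arch (k : ℕ) {q : List Step} (r : List Step) (hq : IsMotzkin q) :
    pltk k (Step.U :: (q ++ Step.D :: r)) =
      pltk k q + pltk k r + if q = List.replicate k Step.F then 1 else 0 := by
  have hD : ¬ plateau k <+: Step.D :: r := by simp [plateau]
  simp only [pltk_eq_countSubword_plateau]
  rw [countSubword_cons, countSubword_append fun i hi =>
      plateau_isPrefix_of_isPrefix_drop_append _ hq hi, countSubword_cons, if_neg hD]
  simp only [plateau_isPrefix_arch_iff r hq]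
  omega

lemma pltk_cons_F (k : ℕ) (p : List Step) : pltk k (Step.F :: p) = pltk k p := by
  have hF : ¬ plateau k <+: Step.F :: p := by simp [plateau]
  rw [pltk_eq_countSubword_plateau, countSubword_cons, if_neg hF, zero_add]
  rfl

lemma pltk_replicate_F (k n : ℕ) : pltk k (List.replicate n Step.F) = 0 := by
  induction n with
  | zero => rfl
  | succ n ih => rw [List.replicate_succ, pltk_cons_F, ih]

def pathsOfLength (n : ℕ) : Finset (List Step) :=
  (Finset.univ : Finset (Fin n → Step)).image List.ofFn

lemma mem_pathsOfLength {n : ℕ} {p : List Step} : p ∈ pathsOfLength n ↔ p.length = n := by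
  simp only [pathsOfLength, Finset.mem_image, Finset.mem_univ, true_and]
  constructor
  · rintro ⟨f, rfl⟩
    exact List.length_ofFn
  · rintro rfl
    exact ⟨p.get, List.ofFn_get p⟩

lemma pathsOfLength_zero : pathsOfLength 0 = {[]} := by
  ext p
  simp [mem_pathsOfLength]

lemma sum_pathsOfLength {M : Type*} [AddCommMonoid M] (n : ℕ) (g : List Step → M) :
    ∑ p ∈ pathsOfLength n, g p = ∑ f : Fin n → Step, g (List.ofFn f) :=
  Finset.sum_image fun _ _ _ _ h => List.ofFn_injective h

lemma sum_pathsOfLength_succ {M : Type*} [AddCommMonoid M] (n : ℕ) (g : List Step → M) :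
    ∑ p ∈ pathsOfLength (n + 1), g p =
      ∑ p ∈ pathsOfLength n, (g (Step.U :: p) + g (Step.F :: p) + g (Step.D :: p)) := by
  rw [sum_pathsOfLength, sum_pathsOfLength, ← (Fin.consEquiv fun _ => Step).sum_comp,
    Fintype.sum_prod_type, Finset.sum_comm]
  refine Finset.sum_congr rfl fun f _ => ?_
  show ∑ x ∈ {Step.U, Step.F, Step.D}, g (List.ofFn (Fin.cons x f)) = _
  simp [add_assoc]

noncomputable def weight (k m : ℕ) (p : List Step) : ℚ[X] :=
  if IsBddMotzkin m p then X ^ pltk k p else 0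

lemma coeff_FpltkBdd (k m n : ℕ) :
    PowerSeries.coeff n (FpltkBdd k m) = ∑ p ∈ pathsOfLength n, weight k m p := by
  rw [FpltkBdd, PowerSeries.coeff_mk, sum_pathsOfLength]
  refine Finset.sum_congr rfl fun f _ => ?_
  simp only [weight, isBddMotzkin_iff, List.length_ofFn]

lemma weight_ne_zero_iff {k m : ℕ} {p : List Step} : weight k m p ≠ 0 ↔ IsBddMotzkin m p := by
  unfold weight
  split_ifs with h <;> simp [h]

lemma weight_cons_F (k m : ℕ) (p : List Step) : weight k m (Step.F :: p) = weight k m p := by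
  simp only [weight, isBddMotzkin_cons_F_iff, pltk_cons_F]

lemma weight_cons_D (k m : ℕ) (p : List Step) : weight k m (Step.D :: p) = 0 :=
  if_neg fun h => not_isMotzkin_cons_D p h.isMotzkin

lemma weight_replicate_F (k m n : ℕ) : weight k m (List.replicate n Step.F) = 1 := by
  rw [weight, if_pos (isBddMotzkin_replicate_F m n), pltk_replicate_F, pow_zero]

lemma weight_arch (k m : ℕ) {q : List Step} (r : List Step) (hq : IsMotzkin q) :
    weight k (m + 1) (Step.U :: (q ++ Step.D :: r)) =
      weight k m q * (if q = List.replicate k Step.F then X else 1) * weight k (m + 1) r := by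
  simp only [weight, isBddMotzkin_arch_iff r hq, pltk_arch k r hq]
  by_cases hq' : IsBddMotzkin m q <;> by_cases hr : IsBddMotzkin (m + 1) r <;>
    simp only [hq', hr, and_self, and_false, false_and, if_true, if_false, zero_mul, mul_zero]
  split_ifs <;> ring

noncomputable def archInteriorSeries (k m : ℕ) : PowerSeries ℚ[X] :=
  FpltkBdd k m + PowerSeries.C (X - 1) * PowerSeries.X ^ k

lemma coeff_archInteriorSeries (k m n : ℕ) :
    PowerSeries.coeff n (archInteriorSeries k m) =
      ∑ q ∈ pathsOfLength n, weight k m q * (if q = List.replicate k Step.F then X else 1) := by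
  have h : ∀ q, weight k m q * (if q = List.replicate k Step.F then X else 1) =
      weight k m q + if q = List.replicate k Step.F then X - 1 else 0 := by
    intro q
    split_ifs with hq
    · rw [hq, weight_replicate_F]
      ring
    · ring
  simp only [h, Finset.sum_add_distrib, Finset.sum_ite_eq', mem_pathsOfLength,
    List.length_replicate, archInteriorSeries, map_add, coeff_FpltkBdd, PowerSeries.coeff_C_mul,
    PowerSeries.coeff_X_pow]
  simp only [mul_ite, mul_one, mul_zero, eq_comm (a := n)]

lemma sum_weight_U_cons_succ (k m n : ℕ) :
    ∑ p ∈ pathsOfLength (n + 1), weight k (m + 1) (Step.U :: p) =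
      PowerSeries.coeff n (archInteriorSeries k m * FpltkBdd k (m + 1)) := by
  simp only [PowerSeries.coeff_mul, coeff_archInteriorSeries, coeff_FpltkBdd, Finset.sum_mul_sum,
    ← Finset.sum_product', Finset.sum_sigma']
  symm
  refine Finset.sum_bij_ne_zero (fun x _ _ => x.2.1 ++ Step.D :: x.2.2) ?_ ?_ ?_ ?_
  · rintro ⟨⟨a, b⟩, q, r⟩ hx -
    simp only [Finset.mem_sigma, Finset.mem_product, Finset.HasAntidiagonal.mem_antidiagonal,
      mem_pathsOfLength] at hx ⊢
    simp only [List.length_append, List.length_cons]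
    omega
  · rintro ⟨⟨a₁, b₁⟩, q₁, r₁⟩ hx₁ hw₁ ⟨⟨a₂, b₂⟩, q₂, r₂⟩ hx₂ hw₂ h
    simp only [Finset.mem_sigma, Finset.mem_product, Finset.HasAntidiagonal.mem_antidiagonal,
      mem_pathsOfLength] at hx₁ hx₂
    obtain ⟨rfl, rfl⟩ := arch_injective
      (weight_ne_zero_iff.1 (left_ne_zero_of_mul (left_ne_zero_of_mul hw₁))).isMotzkin
      (weight_ne_zero_iff.1 (left_ne_zero_of_mul (left_ne_zero_of_mul hw₂))).isMotzkin h
    obtain ⟨-, rfl, rfl⟩ := hx₁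
    obtain ⟨-, rfl, rfl⟩ := hx₂
    rfl
  · intro p hp hw
    obtain ⟨q, r, hq, rfl⟩ := exists_eq_arch (weight_ne_zero_iff.1 hw).isMotzkin
    rw [mem_pathsOfLength, List.length_append, List.length_cons] at hp
    refine ⟨⟨(q.length, r.length), q, r⟩, ?_, ?_, rfl⟩
    · simp only [Finset.mem_sigma, Finset.mem_product, Finset.HasAntidiagonal.mem_antidiagonal,
        mem_pathsOfLength]
      exact ⟨by omega, trivial, trivial⟩
    · rwa [← weight_arch k m r hq]
  · rintro ⟨⟨a, b⟩, q, r⟩ - hw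
    exact (weight_arch k m r
      (weight_ne_zero_iff.1 (left_ne_zero_of_mul (left_ne_zero_of_mul hw))).isMotzkin).symm

lemma FpltkBdd_succ_eq (k m : ℕ) :
    FpltkBdd k (m + 1) = 1 + PowerSeries.X * (FpltkBdd k (m + 1) +
      PowerSeries.X * (archInteriorSeries k m * FpltkBdd k (m + 1))) := by
  refine PowerSeries.ext fun n => ?_
  rcases n with _ | n
  · simpa [coeff_FpltkBdd, pathsOfLength_zero] using weight_replicate_F k (m + 1) 0
  rw [coeff_FpltkBdd, sum_pathsOfLength_succ, map_add, PowerSeries.coeff_one,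
    if_neg n.succ_ne_zero, zero_add, PowerSeries.coeff_succ_X_mul, map_add, coeff_FpltkBdd]
  simp only [weight_cons_F, weight_cons_D, add_zero, Finset.sum_add_distrib]
  rcases n with _ | n
  · have hU : ¬ IsBddMotzkin (m + 1) [Step.U] := fun h => by simpa [stepVal] using h.1
    simp [pathsOfLength_zero, weight, hU]
  · rw [PowerSeries.coeff_succ_X_mul, sum_weight_U_cons_succ, add_comm]

lemma FpltkBdd_succ_mul (k m : ℕ) :
    FpltkBdd k (m + 1) * (1 - PowerSeries.X - PowerSeries.X ^ (k + 2) *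
      (PowerSeries.C X - 1) - PowerSeries.X ^ 2 * FpltkBdd k m) = 1 := by
  have h := FpltkBdd_succ_eq k m
  rw [archInteriorSeries, map_sub, map_one] at h
  linear_combination h

lemma FpltkBdd_zero (k : ℕ) : FpltkBdd k 0 = PowerSeries.mk 1 := by
  refine PowerSeries.ext fun n => ?_
  rw [coeff_FpltkBdd, PowerSeries.coeff_mk, Pi.one_apply,
    Finset.sum_eq_single (List.replicate n Step.F)]
  · exact weight_replicate_F k 0 n
  · intro p hp hne
    rw [weight, if_neg]
    rwa [isBddMotzkin_zero_iff, mem_pathsOfLength.1 hp]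
  · exact fun h => absurd (mem_pathsOfLength.2 (List.length_replicate ..)) h

theorem bounded_kplateaus_eq_ratio_general (k : ℕ) (P : ℕ → PowerSeries (Polynomial ℚ))
    (hP0 : P 0 = 1) (hP1 : P 1 = 1 - PowerSeries.X)
    (hPrec : ∀ m, P (m + 2) =
      (1 - PowerSeries.X - PowerSeries.X ^ (k + 2)
          * (PowerSeries.C (R := Polynomial ℚ) Polynomial.X - 1)) * P (m + 1)
        - PowerSeries.X ^ 2 * P m)
    (m : ℕ) :
    FpltkBdd k m * P (m + 1) = P m := by
  induction m with
  | zero => rw [hP1, hP0, FpltkBdd_zero, PowerSeries.mk_one_mul_one_sub_eq_one]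
  | succ m ih =>
    rw [hPrec m, ← ih]
    linear_combination P (m + 1) * FpltkBdd_succ_mul k m

/-- With P₀ = 1, P₁ = 1 − x, P\_m = (1 − x − x^{k+2}(t−1))P\_{m−1} − x²P\_{m−2},
the k-plateau generating function for Motzkin paths of height at most m equals
P\_m / P\_{m+1}, i.e. F\_m · P\_{m+1} = P\_m. -/
theorem bounded_kplateaus_eq_ratio (k : ℕ) (P : ℕ → PowerSeries (Polynomial ℚ))
    (hP0 : P 0 = 1) (hP1 : P 1 = 1 - PowerSeries.X)
    (hPrec : ∀ m, P (m + 2) =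
      (1 - PowerSeries.X - PowerSeries.X ^ (k + 2)
          * (PowerSeries.C (R := Polynomial ℚ) Polynomial.X - 1)) * P (m + 1)
        - PowerSeries.X ^ 2 * P m)
    (m : ℕ) (hm : 1 ≤ m) :
    FpltkBdd k m * P (m + 1) = P m :=
  bounded_kplateaus_eq_ratio_general k P hP0 hP1 hPrec m
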